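/- arXiv:math/9903066 — 2 statements merged into one kernel-verified Lean document; each statement's English description precedes it below -/
import Mathlib

section
/- For every integer n ≥ 1 and positive real numbers m_1, …, m_n, one has (n−2) · σ_n(m_1,…,m_n) / σ_{n-1}(m_1,…,m_n) ≤ (1/4) · (m_1 + ⋯ + m_n). -/
theorem esym_ratio_bound (n : ℕ) (hn : 1 ≤ n) (m : Fin n → ℝ) (hm : ∀ i, 0 < m i) :
    ((n : ℝ) - 2) * (∏ i, m i) / (∑ i, ∏ j ∈ Finset.univ.erase i, m j) ≤
      (1 / 4) * ∑ i, m i := by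
  have hne : (Finset.univ : Finset (Fin n)).Nonempty := ⟨⟨0, hn⟩, Finset.mem_univ _⟩
  have hP : 0 < ∏ i, m i := Finset.prod_pos fun i _ => hm i
  have hT : 0 < ∑ i, (m i)⁻¹ := Finset.sum_pos (fun i _ => inv_pos.2 (hm i)) hne
  have hS : 0 < ∑ i, m i := Finset.sum_pos (fun i _ => hm i) hne
  have hD : (∑ i, ∏ j ∈ Finset.univ.erase i, m j) = (∏ i, m i) * ∑ i, (m i)⁻¹ := by
    rw [Finset.mul_sum]
    refine Finset.sum_congr rfl fun i _ => ?_
    rw [← Finset.prod_erase_mul Finset.univ m (Finset.mem_univ i),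
      mul_inv_cancel_right₀ (hm i).ne']
  have hCS : ((n : ℝ)) ^ 2 ≤ (∑ i, m i) * ∑ i, (m i)⁻¹ := by
    have h1 : ∀ i : Fin n, Real.sqrt (m i) * Real.sqrt (m i)⁻¹ = 1 := by
      intro i
      rw [← Real.sqrt_mul (hm i).le, mul_inv_cancel₀ (hm i).ne', Real.sqrt_one]
    have h2 : ∀ i : Fin n, Real.sqrt (m i) ^ 2 = m i := fun i => Real.sq_sqrt (hm i).le
    have h3 : ∀ i : Fin n, Real.sqrt (m i)⁻¹ ^ 2 = (m i)⁻¹ := fun i =>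
      Real.sq_sqrt (inv_pos.2 (hm i)).le
    calc ((n : ℝ)) ^ 2 ≤ (∑ i : Fin n, Real.sqrt (m i) * Real.sqrt (m i)⁻¹) ^ 2 := by
          have e : (∑ i : Fin n, Real.sqrt (m i) * Real.sqrt (m i)⁻¹) = n := by
            simp only [h1]; simp
          rw [e]
      _ ≤ (∑ i, Real.sqrt (m i) ^ 2) * ∑ i, Real.sqrt (m i)⁻¹ ^ 2 :=
          Finset.sum_mul_sq_le_sq_mul_sq _ _ _
      _ = (∑ i, m i) * ∑ i, (m i)⁻¹ := by simp only [h2, h3]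
  rw [hD, mul_comm ((n:ℝ) - 2) (∏ i, m i), mul_div_mul_left _ _ hP.ne',
    div_le_iff₀ hT]
  nlinarith [hCS, hS, hT]
end

section
/- Let R be a commutative ring and let X₀, X₁, B, C ∈ R. Set L = X₀X₁B + (X₀ + X₁)C, P₀ = X₁B + C, and P₁ = X₀B + C. Then L = P₀X₀ + P₁X₁ − X₀X₁B, and L divides (X₀ + X₁)P₀²X₀³ + (X₀ + X₁)P₁²X₁³ − (P₀X₀ + P₁X₁)²X₀X₁. -/
theorem key_divisibility {R : Type*} [CommRing R] (X₀ X₁ B C : R)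
    (L P₀ P₁ : R)
    (hL : L = X₀ * X₁ * B + (X₀ + X₁) * C)
    (hP₀ : P₀ = X₁ * B + C) (hP₁ : P₁ = X₀ * B + C) :
    L = P₀ * X₀ + P₁ * X₁ - X₀ * X₁ * B ∧
    L ∣ ((X₀ + X₁) * P₀ ^ 2 * X₀ ^ 3 + (X₀ + X₁) * P₁ ^ 2 * X₁ ^ 3
      - (P₀ * X₀ + P₁ * X₁) ^ 2 * X₀ * X₁) := by
  subst hL hP₀ hP₁
  refine ⟨by ring, ⟨(X₀ - X₁) ^ 2 * (X₀ * X₁ * B + (X₀ + X₁) * C), by ring⟩⟩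
end
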